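/- Let E* be the error matrix of an optimal solution X* to the L1-PCA problem min_{XᵀX=I_p} ∑_{i,j} |(A − A X Xᵀ)_{ij}|, and define w* by w*_i = (∑_j |e*_{ij}|)/(∑_j (e*_{ij})²) when the denominator is positive, M > 0 otherwise. Then g(w*) := min_{XᵀX=I_p} ∑_i w*_i ∑_j (A − A X Xᵀ)_{ij}² satisfies g(w*) ≤ ∑_{i,j} |e*_{ij}|, i.e., the optimal weighted L2 objective with weights w* is a lower bound on the optimal L1 objective value. -/
import Mathlib


open Matrix Finset

theorem weighted_L2_lower_bounds_L1 (n m p : ℕ) (A : Matrix (Fin n) (Fin m) ℝ)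
    (Xstar : Matrix (Fin m) (Fin p) ℝ) (hXstar : Xstarᵀ * Xstar = 1)
    (hopt : ∀ X : Matrix (Fin m) (Fin p) ℝ, Xᵀ * X = 1 →
      ∑ i, ∑ j, |(A - A * Xstar * Xstarᵀ) i j| ≤ ∑ i, ∑ j, |(A - A * X * Xᵀ) i j|)
    (Estar : Matrix (Fin n) (Fin m) ℝ) (hE : Estar = A - A * Xstar * Xstarᵀ)
    (M : ℝ) (hM : 0 < M) (wstar : Fin n → ℝ)
    (hw : ∀ i, wstar i = if (∑ j, (Estar i j) ^ 2) > 0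
        then (∑ j, |Estar i j|) / (∑ j, (Estar i j) ^ 2) else M) :
    sInf {c : ℝ | ∃ X : Matrix (Fin m) (Fin p) ℝ, Xᵀ * X = 1 ∧
        c = ∑ i, wstar i * ∑ j, ((A - A * X * Xᵀ) i j) ^ 2} ≤
      ∑ i, ∑ j, |Estar i j| := by
  have hwpos : ∀ i, 0 ≤ wstar i := by
    intro i
    rw [hw i]
    split_ifs with h
    · exact div_nonneg (Finset.sum_nonneg fun j _ => abs_nonneg _) h.le
    · exact hM.le
  have hval : (∑ i, wstar i * ∑ j, ((A - A * Xstar * Xstarᵀ) i j) ^ 2) ≤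
      ∑ i, ∑ j, |Estar i j| := by
    apply Finset.sum_le_sum
    intro i _
    rw [hw i]
    split_ifs with h
    · rw [← hE, div_mul_cancel₀ _ h.ne']
    · have h0 : (∑ j, (Estar i j) ^ 2) = 0 := by
        have := Finset.sum_nonneg (fun j (_ : j ∈ Finset.univ) => sq_nonneg (Estar i j))
        linarith [not_lt.mp h]
      have : (∑ j, ((A - A * Xstar * Xstarᵀ) i j) ^ 2) = 0 := by rw [← hE]; exact h0
      rw [this, mul_zero]
      exact Finset.sum_nonneg fun j _ => abs_nonneg _
  have hmem : (∑ i, wstar i * ∑ j, ((A - A * Xstar * Xstarᵀ) i j) ^ 2) ∈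
      {c : ℝ | ∃ X : Matrix (Fin m) (Fin p) ℝ, Xᵀ * X = 1 ∧
        c = ∑ i, wstar i * ∑ j, ((A - A * X * Xᵀ) i j) ^ 2} :=
    ⟨Xstar, hXstar, rfl⟩
  have hbdd : BddBelow {c : ℝ | ∃ X : Matrix (Fin m) (Fin p) ℝ, Xᵀ * X = 1 ∧
      c = ∑ i, wstar i * ∑ j, ((A - A * X * Xᵀ) i j) ^ 2} := by
    refine ⟨0, fun c hc => ?_⟩
    obtain ⟨X, _, rfl⟩ := hc
    exact Finset.sum_nonneg fun i _ => mul_nonneg (hwpos i)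
      (Finset.sum_nonneg fun j _ => sq_nonneg _)
  exact le_trans (csInf_le hbdd hmem) hval
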